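/- Let (W,S) be a Coxeter system and I_• = [I_0,…,I_d] a singlestep expression. The forward path subordinate to I_• (the path in which, at every step with I_k ⊃ I_{k+1}, one chooses p_{k+1} to be the coset contained in p_k with the same maximal element: max(p_{k+1}) = max(p_k)) terminates at the coset expressed by I_•, i.e., at the unique (I_0,I_d)-coset p with max(p) = w_{I_0} * w_{I_1} * ⋯ * w_{I_d}. -/

import Mathlib

namespace CoxeterPaper

open CoxeterSystem

variable {B : Type*} {W : Type*} [Group W] {M : CoxeterMatrix B}

/-- The Bruhat order on a Coxeter group: the reflexive-transitive closure of the
relation `a < a * t` for `t` a reflection with length increasing. -/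
def BruhatLE (cs : CoxeterSystem M W) (x y : W) : Prop :=
  Relation.ReflTransGen
    (fun a b => (∃ t, cs.IsReflection t ∧ b = a * t) ∧ cs.length a < cs.length b) x y

/-- One step of the Demazure product with a simple reflection. -/
noncomputable def demStep (cs : CoxeterSystem M W) (x : W) (i : B) : W :=
  if cs.length x < cs.length (x * cs.simple i) then x * cs.simple i else x

/-- The Demazure product of `x` with the word `l`. -/
noncomputable def demWord (cs : CoxeterSystem M W) (x : W) (l : List B) : W :=
  l.foldl (demStep cs) x

/-- The Demazure product (Coxeter monoid product) of two elements: fold the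
Demazure action of a reduced word of `y` onto `x`. -/
noncomputable def dem (cs : CoxeterSystem M W) (x y : W) : W :=
  demWord cs x (Classical.choose (cs.exists_reduced_word y))

/-- The standard parabolic subgroup attached to a set of simple indices. -/
def parabolic (cs : CoxeterSystem M W) (I : Set B) : Subgroup W :=
  Subgroup.closure (cs.simple '' I)

/-- `I` is finitary if the parabolic subgroup `W_I` is finite. -/
def Finitary (cs : CoxeterSystem M W) (I : Set B) : Prop :=
  (parabolic cs I : Set W).Finite

/-- The double coset `W_I w W_J` as a subset of `W`. -/
def doset (cs : CoxeterSystem M W) (I J : Set B) (w : W) : Set W :=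
  {x | ∃ a ∈ parabolic cs I, ∃ b ∈ parabolic cs J, x = a * w * b}

/-- `p` is an `(I,J)`-double coset. -/
def IsDCoset (cs : CoxeterSystem M W) (I J : Set B) (p : Set W) : Prop :=
  ∃ w, p = doset cs I J w

/-- `m` is the Bruhat-minimal element of `p`. -/
def IsMinOf (cs : CoxeterSystem M W) (p : Set W) (m : W) : Prop :=
  m ∈ p ∧ ∀ x ∈ p, BruhatLE cs m x

/-- `m` is the Bruhat-maximal element of `p`. -/
def IsMaxOf (cs : CoxeterSystem M W) (p : Set W) (m : W) : Prop :=
  m ∈ p ∧ ∀ x ∈ p, BruhatLE cs x m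

/-- `[I 0, …, I d]` is a singlestep expression. -/
def IsSinglestep (I : ℕ → Set B) (d : ℕ) : Prop :=
  ∀ k < d, (∃ s, s ∉ I k ∧ I (k + 1) = insert s (I k)) ∨
    (∃ s, s ∈ I k ∧ I (k + 1) = I k \ {s})

/-- `p` is a path subordinate to the singlestep expression `[I 0, …, I d]`. -/
def IsSubPath (cs : CoxeterSystem M W) (I : ℕ → Set B) (d : ℕ) (p : ℕ → Set W) : Prop :=
  p 0 = doset cs (I 0) (I 0) 1 ∧
  (∀ i ≤ d, IsDCoset cs (I 0) (I i) (p i)) ∧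
  ∀ k < d, (I k ⊆ I (k + 1) → p k ⊆ p (k + 1)) ∧ (I (k + 1) ⊆ I k → p (k + 1) ⊆ p k)

/-- The Demazure product `w_{I_0} * w_{I_1} * ⋯ * w_{I_d}` of the longest elements
`wI 0, …, wI d`. -/
noncomputable def exprMax (cs : CoxeterSystem M W) (wI : ℕ → W) (d : ℕ) : W :=
  ((List.range d).map fun k => wI (k + 1)).foldl (dem cs) (wI 0)

/-!
Induct along the path. At a step `I k ⊃ I (k + 1)` the forward path keeps its maximum `m`, and
the Demazure product `m * w_{I (k+1)}` is `m` again, since every simple reflection of `I (k + 1)`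
is a right descent of `m`. At a step `I k ⊂ I (k + 1)`, the element `u = m * w_{I (k+1)}` lies in
`p (k + 1)`, has every reflection of `W_{I 0}` as a left inversion (inherited from `m`) and every
reflection of `W_{I (k+1)}` as a right inversion (inherited from the longest element). For such `u`,
conjugation by `b⁻¹` embeds the right inversions of any `a * u * b` in the double coset into those
of `u`, so `u` has maximal length there and is the Bruhat maximum. The inversion sets are handled
through the sign representation of `W` on `W × ℤˣ`, which gives the strong exchange property.
-/

end CoxeterPaper

namespace CoxeterSystem

open scoped Classical

variable {B W : Type*} [Group W] {M : CoxeterMatrix B} (cs : CoxeterSystem M W)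

local prefix:100 "s " => cs.simple
local prefix:100 "π " => cs.wordProd
local prefix:100 "ℓ " => cs.length
local prefix:100 "ris " => cs.rightInvSeq
local prefix:100 "lis " => cs.leftInvSeq

theorem reverse_alternatingWord_two_mul (i i' : B) (m : ℕ) :
    (alternatingWord i i' (2 * m)).reverse = alternatingWord i' i (2 * m) := by
  induction m with
  | zero => rfl
  | succ m ih =>
    rw [show 2 * (m + 1) = 2 * m + 1 + 1 by ring, alternatingWord_succ', alternatingWord_succ',
      alternatingWord_succ, alternatingWord_succ]
    simp [ih]

theorem even_count_rightInvSeq_braidWord (i i' : B) (t : W) :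
    Even ((ris (alternatingWord i i' (2 * M i i'))).count t) := by
  set m := M i i'
  have hlis : lis (alternatingWord i' i (2 * m)) =
      (List.range (2 * m)).map fun k => s i' * (s i * s i') ^ k := by
    refine List.ext_getElem (by simp) fun k hk _ => ?_
    rw [getElem_leftInvSeq_alternatingWord cs i' i m k (by simpa using hk),
      prod_alternatingWord_eq_mul_pow]
    simp [show (2 * k + 1) / 2 = k by omega]
  have hperiodic : (List.range m).map (fun k => s i' * (s i * s i') ^ (m + k)) =
      (List.range m).map fun k => s i' * (s i * s i') ^ k := by
    simp [pow_add, m, simple_mul_simple_pow]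
  rw [← reverse_alternatingWord_two_mul, rightInvSeq_reverse, List.count_reverse, hlis, two_mul,
    List.range_add, List.map_append, List.map_map, Function.comp_def, hperiodic,
    List.count_append]
  exact ⟨_, rfl⟩

theorem conj_eq_simple_iff {w t : W} {i : B} : w * t * w⁻¹ = s i ↔ t = w⁻¹ * s i * w := by
  constructor
  · rintro h; rw [← h]; group
  · rintro rfl; group

noncomputable section

/-- The generator `s i` of the sign representation `sgnRep` of Björner–Brenti, *Combinatorics of
Coxeter groups*, §1.4, which yields the strong exchange property. -/
def sgnPerm (i : B) : Equiv.Perm (W × ℤˣ) :=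
  Function.Involutive.toPerm (fun p => (s i * p.1 * s i, (if p.1 = s i then -1 else 1) * p.2))
    fun ⟨t, e⟩ => by
      have h : s i * t * s i = s i ↔ t = s i := by
        simpa [inv_simple] using conj_eq_simple_iff cs (w := s i) (t := t) (i := i)
      by_cases ht : t = s i <;> simp [ht, h, ← mul_assoc]

theorem sgnPerm_apply (i : B) (t : W) (e : ℤˣ) :
    cs.sgnPerm i (t, e) = (s i * t * s i, (if t = s i then -1 else 1) * e) := rfl

theorem prod_map_sgnPerm (ω : List B) (t : W) (e : ℤˣ) :
    (ω.map cs.sgnPerm).prod (t, e) = (π ω * t * (π ω)⁻¹, (-1) ^ (ris ω).count t * e) := by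
  induction ω generalizing t e with
  | nil => simp
  | cons i ω ih =>
    rw [List.map_cons, List.prod_cons, Equiv.Perm.mul_apply, ih, sgnPerm_apply, wordProd_cons]
    refine Prod.ext (by simp only [mul_inv_rev, inv_simple]; group) ?_
    simp only [rightInvSeq, List.count_cons, conj_eq_simple_iff, beq_iff_eq, eq_comm (a := t)]
    split_ifs <;> simp [pow_succ]

theorem isLiftable_sgnPerm : M.IsLiftable cs.sgnPerm := by
  intro i i'
  have hword : ∀ m, (cs.sgnPerm i * cs.sgnPerm i') ^ m =
      ((alternatingWord i i' (2 * m)).map cs.sgnPerm).prod := by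
    intro m
    induction m with
    | zero => rfl
    | succ m ih =>
      rw [show 2 * (m + 1) = 2 * m + 1 + 1 by ring, alternatingWord_succ', alternatingWord_succ',
        pow_succ', ih]
      simp [mul_assoc]
  ext ⟨t, e⟩ <;>
  · rw [hword, prod_map_sgnPerm, prod_alternatingWord_eq_mul_pow,
      (even_count_rightInvSeq_braidWord cs i i' t).neg_one_pow]
    simp [simple_mul_simple_pow]

def sgnRep : W →* Equiv.Perm (W × ℤˣ) := cs.lift ⟨cs.sgnPerm, cs.isLiftable_sgnPerm⟩

theorem sgnRep_wordProd (ω : List B) : cs.sgnRep (π ω) = (ω.map cs.sgnPerm).prod := by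
  rw [wordProd, map_list_prod, List.map_map]
  congr 1
  exact List.map_congr_left fun i _ => cs.lift_apply_simple cs.isLiftable_sgnPerm i

def sgn (w t : W) : ℤˣ := (cs.sgnRep w (t, 1)).2

end

theorem sgn_wordProd (ω : List B) (t : W) : cs.sgn (π ω) t = (-1) ^ (ris ω).count t := by
  simp [sgn, sgnRep_wordProd, prod_map_sgnPerm]

theorem sgnRep_apply (w t : W) (e : ℤˣ) : cs.sgnRep w (t, e) = (w * t * w⁻¹, cs.sgn w t * e) := by
  obtain ⟨ω, rfl⟩ := cs.wordProd_surjective w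
  rw [sgn_wordProd, sgnRep_wordProd, prod_map_sgnPerm]

theorem sgn_mul (w v t : W) : cs.sgn (w * v) t = cs.sgn w (v * t * v⁻¹) * cs.sgn v t := by
  rw [sgn, map_mul, Equiv.Perm.mul_apply, sgnRep_apply, sgnRep_apply, mul_one]

theorem sgn_one (t : W) : cs.sgn 1 t = 1 := by
  simp [sgn]

theorem sgn_simple_self (i : B) : cs.sgn (s i) (s i) = -1 := by
  simpa using cs.sgn_wordProd [i] (s i)

theorem sgn_self {t : W} (ht : cs.IsReflection t) : cs.sgn t t = -1 := by
  obtain ⟨u, i, rfl⟩ := ht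
  have hconj : u⁻¹ * (u * s i * u⁻¹) * u⁻¹⁻¹ = s i := by group
  have hcancel := cs.sgn_mul u u⁻¹ (u * s i * u⁻¹)
  rw [mul_inv_cancel, sgn_one, hconj] at hcancel
  rw [cs.sgn_mul (u * s i) u⁻¹, hconj, sgn_mul, sgn_simple_self, mul_inv_cancel_right,
    mul_right_comm, ← hcancel, one_mul]

theorem mem_rightInvSeq_of_sgn_eq_neg_one {ω : List B} {t : W} (h : cs.sgn (π ω) t = -1) :
    t ∈ ris ω := by
  by_contra ht
  rw [sgn_wordProd, List.count_eq_zero_of_not_mem ht, pow_zero] at h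
  exact absurd h (by decide)

theorem isRightInversion_of_sgn_eq_neg_one {w t : W} (h : cs.sgn w t = -1) :
    cs.IsRightInversion w t := by
  obtain ⟨ω, hω, rfl⟩ := cs.exists_isReduced w
  exact cs.isRightInversion_of_mem_rightInvSeq hω (cs.mem_rightInvSeq_of_sgn_eq_neg_one h)

theorem sgn_eq_neg_one_iff {w t : W} : cs.sgn w t = -1 ↔ cs.IsRightInversion w t := by
  refine ⟨cs.isRightInversion_of_sgn_eq_neg_one, fun ht => ?_⟩
  have hwt : cs.sgn (w * t) t = 1 := by
    refine (Int.units_eq_one_or _).resolve_right fun h => ?_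
    have := (cs.isRightInversion_of_sgn_eq_neg_one h).2
    rw [mul_assoc, ht.1.mul_self, mul_one] at this
    exact absurd ht.2 (by omega)
  calc cs.sgn w t = cs.sgn (w * t * t) t := by rw [mul_assoc, ht.1.mul_self, mul_one]
    _ = -1 := by rw [sgn_mul, mul_inv_cancel_right, hwt, sgn_self cs ht.1, one_mul]

theorem sgn_eq_one_of_not_isRightInversion {w t : W} (h : ¬cs.IsRightInversion w t) :
    cs.sgn w t = 1 :=
  (Int.units_eq_one_or _).resolve_right (mt cs.sgn_eq_neg_one_iff.mp h)

/-- The strong exchange property. -/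
theorem mem_rightInvSeq_iff {ω : List B} (hω : cs.IsReduced ω) {t : W} :
    t ∈ ris ω ↔ cs.IsRightInversion (π ω) t :=
  ⟨cs.isRightInversion_of_mem_rightInvSeq hω,
    fun h => cs.mem_rightInvSeq_of_sgn_eq_neg_one (cs.sgn_eq_neg_one_iff.mpr h)⟩

theorem isRightInversion_conj_of_mul {w v t : W} (h : cs.IsRightInversion (w * v) t)
    (hv : ¬cs.IsRightInversion v t) : cs.IsRightInversion w (v * t * v⁻¹) := by
  rw [← sgn_eq_neg_one_iff, sgn_mul, sgn_eq_one_of_not_isRightInversion cs hv, mul_one] at h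
  exact cs.isRightInversion_of_sgn_eq_neg_one h

theorem coe_toFinset_rightInvSeq {ω : List B} (hω : cs.IsReduced ω) :
    ((ris ω).toFinset : Set W) = {t | cs.IsRightInversion (π ω) t} := by
  ext t
  simp [cs.mem_rightInvSeq_iff hω]

theorem finite_setOf_isRightInversion (w : W) : {t | cs.IsRightInversion w t}.Finite := by
  obtain ⟨ω, hω, rfl⟩ := cs.exists_isReduced w
  rw [← cs.coe_toFinset_rightInvSeq hω]
  exact Finset.finite_toSet _

theorem ncard_setOf_isRightInversion (w : W) : {t | cs.IsRightInversion w t}.ncard = ℓ w := by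
  obtain ⟨ω, hω, rfl⟩ := cs.exists_isReduced w
  rw [← cs.coe_toFinset_rightInvSeq hω, Set.ncard_coe_finset,
    List.toFinset_card_of_nodup hω.nodup_rightInvSeq, length_rightInvSeq, hω.eq]

variable {cs}

theorem IsRightInversion.mul_left {x z t : W} (ht : cs.IsRightInversion z t)
    (h : ℓ (x * z) = ℓ x + ℓ z) : cs.IsRightInversion (x * z) t := by
  refine ⟨ht.1, ?_⟩
  have := cs.length_mul_le x (z * t)
  have := ht.2
  rw [mul_assoc]
  omega

theorem IsLeftInversion.mul_right {x z t : W} (ht : cs.IsLeftInversion x t)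
    (h : ℓ (x * z) = ℓ x + ℓ z) : cs.IsLeftInversion (x * z) t := by
  refine ⟨ht.1, ?_⟩
  have := cs.length_mul_le (t * x) z
  have := ht.2
  rw [← mul_assoc]
  omega

end CoxeterSystem

namespace CoxeterPaper

open CoxeterSystem

variable {B : Type*} {W : Type*} [Group W] {M : CoxeterMatrix B}

section

variable (cs : CoxeterSystem M W)

local prefix:100 "s " => cs.simple
local prefix:100 "π " => cs.wordProd
local prefix:100 "ℓ " => cs.length
local prefix:100 "ris " => cs.rightInvSeq

theorem simple_mem_parabolic {X : Set B} {i : B} (hi : i ∈ X) : s i ∈ parabolic cs X :=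
  Subgroup.subset_closure ⟨i, hi, rfl⟩

theorem parabolic_mono {X Y : Set B} (h : X ⊆ Y) : parabolic cs X ≤ parabolic cs Y :=
  Subgroup.closure_mono (Set.image_mono h)

theorem wordProd_mem_parabolic {X : Set B} {ω : List B} (hω : ∀ i ∈ ω, i ∈ X) :
    π ω ∈ parabolic cs X :=
  Subgroup.list_prod_mem (K := parabolic cs X) <| by
    simpa using fun i hi => simple_mem_parabolic cs (hω i hi)

theorem exists_wordProd_eq_of_mem_parabolic {X : Set B} {w : W} (hw : w ∈ parabolic cs X) :
    ∃ ω : List B, (∀ i ∈ ω, i ∈ X) ∧ π ω = w := by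
  induction hw using Subgroup.closure_induction with
  | mem _ h =>
    obtain ⟨i, hi, rfl⟩ := h
    exact ⟨[i], by simpa using hi, by simp⟩
  | one => exact ⟨[], by simp, rfl⟩
  | mul _ _ _ _ h₁ h₂ =>
    obtain ⟨ω₁, hω₁, rfl⟩ := h₁
    obtain ⟨ω₂, hω₂, rfl⟩ := h₂
    exact ⟨ω₁ ++ ω₂, fun i hi => (List.mem_append.mp hi).elim (hω₁ i) (hω₂ i),
      by simp [wordProd_append]⟩
  | inv _ _ h =>
    obtain ⟨ω, hω, rfl⟩ := h
    exact ⟨ω.reverse, by simpa using hω, by simp⟩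

theorem mem_parabolic_of_mem_rightInvSeq {X : Set B} {ω : List B} (hω : ∀ i ∈ ω, i ∈ X)
    {t : W} (ht : t ∈ ris ω) : t ∈ parabolic cs X := by
  induction ω with
  | nil => simp at ht
  | cons i ω ih =>
    have hω' : ∀ j ∈ ω, j ∈ X := fun j hj => hω j (List.mem_cons_of_mem i hj)
    rcases List.mem_cons.mp ht with rfl | ht
    · have hπ := wordProd_mem_parabolic cs hω'
      exact mul_mem (mul_mem (inv_mem hπ) (simple_mem_parabolic cs (hω i List.mem_cons_self))) hπ
    · exact ih hω' ht

theorem mem_parabolic_of_isRightInversion {X : Set B} {b t : W} (hb : b ∈ parabolic cs X)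
    (ht : cs.IsRightInversion b t) : t ∈ parabolic cs X := by
  -- The word for `b` with letters in `X` need not be reduced, hence `sgn` rather than the
  -- strong exchange property.
  obtain ⟨ω, hω, rfl⟩ := exists_wordProd_eq_of_mem_parabolic cs hb
  exact mem_parabolic_of_mem_rightInvSeq cs hω
    (cs.mem_rightInvSeq_of_sgn_eq_neg_one (cs.sgn_eq_neg_one_iff.mpr ht))

theorem simple_mem_parabolic_of_isReduced {X : Set B} {ω : List B} (hω : cs.IsReduced ω)
    (hX : π ω ∈ parabolic cs X) : ∀ i ∈ ω, s i ∈ parabolic cs X := by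
  induction ω with
  | nil => simp
  | cons j ω ih =>
    have hj : s j ∈ parabolic cs X := by
      refine mem_parabolic_of_isRightInversion cs (inv_mem hX) ?_
      rw [isRightInversion_inv_iff]
      exact cs.isLeftInversion_of_mem_leftInvSeq hω (by simp [leftInvSeq])
    have hX' : π ω ∈ parabolic cs X := by
      simpa [wordProd_cons, ← mul_assoc] using mul_mem hj hX
    intro i hi
    rcases List.mem_cons.mp hi with rfl | hi
    · exact hj
    · exact ih (by simpa using hω.drop 1) hX' i hi

theorem length_le_of_bruhatLE {x y : W} (h : BruhatLE cs x y) : ℓ x ≤ ℓ y := by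
  induction h with
  | refl => rfl
  | tail _ hbc ih => exact ih.trans hbc.2.le

theorem eq_of_bruhatLE_of_length_le {x y : W} (h : BruhatLE cs x y) (hl : ℓ y ≤ ℓ x) :
    x = y := by
  rcases h.cases_tail with rfl | ⟨b, hxb, hby⟩
  · rfl
  · exact absurd hl (not_le.mpr ((length_le_of_bruhatLE cs hxb).trans_lt hby.2))

variable {cs}

theorem IsMaxOf.eq {P : Set W} {m₁ m₂ : W} (h₁ : IsMaxOf cs P m₁) (h₂ : IsMaxOf cs P m₂) :
    m₁ = m₂ :=
  eq_of_bruhatLE_of_length_le cs (h₂.2 m₁ h₁.1) (length_le_of_bruhatLE cs (h₁.2 m₂ h₂.1))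

theorem IsMaxOf.isRightInversion {P : Set W} {m t : W} (hm : IsMaxOf cs P m)
    (ht : cs.IsReflection t) (hmt : m * t ∈ P) : cs.IsRightInversion m t :=
  ⟨ht, (length_le_of_bruhatLE cs (hm.2 _ hmt)).lt_of_ne (ht.length_mul_left_ne m)⟩

theorem IsMaxOf.isLeftInversion {P : Set W} {m t : W} (hm : IsMaxOf cs P m)
    (ht : cs.IsReflection t) (htm : t * m ∈ P) : cs.IsLeftInversion m t :=
  ⟨ht, (length_le_of_bruhatLE cs (hm.2 _ htm)).lt_of_ne (ht.length_mul_right_ne m)⟩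

variable (cs)

theorem doset_one_self (I : Set B) : doset cs I I 1 = parabolic cs I := by
  ext x
  constructor
  · rintro ⟨a, ha, b, hb, rfl⟩
    simpa using mul_mem ha hb
  · exact fun hx => ⟨x, hx, 1, one_mem _, by simp⟩

theorem doset_eq_of_mem {I J : Set B} {w x : W} (h : x ∈ doset cs I J w) :
    doset cs I J x = doset cs I J w := by
  obtain ⟨a, ha, b, hb, rfl⟩ := h
  ext y
  constructor
  · rintro ⟨a', ha', b', hb', rfl⟩
    exact ⟨a' * a, mul_mem ha' ha, b * b', mul_mem hb hb', by group⟩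
  · rintro ⟨a', ha', b', hb', rfl⟩
    exact ⟨a' * a⁻¹, mul_mem ha' (inv_mem ha), b⁻¹ * b', mul_mem (inv_mem hb) hb', by group⟩

variable {cs}

theorem IsDCoset.eq_doset {I J : Set B} {q : Set W} {x : W} (hq : IsDCoset cs I J q)
    (hx : x ∈ q) : q = doset cs I J x := by
  obtain ⟨w, rfl⟩ := hq
  exact (doset_eq_of_mem cs hx).symm

theorem IsDCoset.mul_mem {I J : Set B} {q : Set W} {x a b : W} (hq : IsDCoset cs I J q)
    (hx : x ∈ q) (ha : a ∈ parabolic cs I) (hb : b ∈ parabolic cs J) : a * x * b ∈ q := by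
  rw [hq.eq_doset hx]
  exact ⟨a, ha, b, hb, rfl⟩

theorem IsDCoset.isLeftInversion_of_isMaxOf {I J : Set B} {q : Set W} {m t : W}
    (hq : IsDCoset cs I J q) (hm : IsMaxOf cs q m) (ht : cs.IsReflection t)
    (htI : t ∈ parabolic cs I) : cs.IsLeftInversion m t :=
  hm.isLeftInversion ht (by simpa using hq.mul_mem hm.1 htI (one_mem _))

theorem IsDCoset.isRightDescent_of_isMaxOf {I J : Set B} {q : Set W} {m : W} {i : B}
    (hq : IsDCoset cs I J q) (hm : IsMaxOf cs q m) (hi : cs.simple i ∈ parabolic cs J) :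
    cs.IsRightDescent m i :=
  (hm.isRightInversion (cs.isReflection_simple i)
    (by simpa using hq.mul_mem hm.1 (one_mem _) hi)).2

variable (cs)

theorem length_mul_mul_le {X Y : Set B} {a v b : W}
    (hX : ∀ t, cs.IsReflection t → t ∈ parabolic cs X → cs.IsLeftInversion v t)
    (hY : ∀ t, cs.IsReflection t → t ∈ parabolic cs Y → cs.IsRightInversion v t)
    (ha : a ∈ parabolic cs X) (hb : b ∈ parabolic cs Y) : ℓ (a * v * b) ≤ ℓ v := by
  have hsub : {t | cs.IsRightInversion (a * v * b) t} ⊆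
      (fun t => b⁻¹ * t * b) '' {t | cs.IsRightInversion v t} := by
    intro t ht
    refine ⟨b * t * b⁻¹, ?_, by group⟩
    by_cases htb : cs.IsRightInversion b t
    · exact hY _ (ht.1.conj b)
        (mul_mem (mul_mem hb (mem_parabolic_of_isRightInversion cs hb htb)) (inv_mem hb))
    by_cases htvb : cs.IsRightInversion (v * b) t
    · exact cs.isRightInversion_conj_of_mul htvb htb
    · rw [mul_assoc] at ht
      have hr := cs.isRightInversion_conj_of_mul ht htvb
      have hrv := hX _ hr.1 (mem_parabolic_of_isRightInversion cs ha hr)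
      refine ⟨ht.1.conj b, ?_⟩
      convert hrv.2 using 2
      group
  calc ℓ (a * v * b) = {t | cs.IsRightInversion (a * v * b) t}.ncard :=
        (cs.ncard_setOf_isRightInversion _).symm
    _ ≤ ((fun t => b⁻¹ * t * b) '' {t | cs.IsRightInversion v t}).ncard :=
        Set.ncard_le_ncard hsub ((cs.finite_setOf_isRightInversion v).image _)
    _ ≤ {t | cs.IsRightInversion v t}.ncard :=
        Set.ncard_image_le (cs.finite_setOf_isRightInversion v)
    _ = ℓ v := cs.ncard_setOf_isRightInversion v

theorem demStep_cases (x : W) (j : B) :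
    (demStep cs x j = x * s j ∧ ℓ (x * s j) = ℓ x + 1) ∨
      (demStep cs x j = x ∧ ℓ (x * s j) + 1 = ℓ x) := by
  unfold demStep
  rcases cs.length_mul_simple x j with h | h
  · exact .inl ⟨if_pos (by omega), h⟩
  · exact .inr ⟨if_neg (by omega), h⟩

theorem inv_mul_demWord_mem {H : Subgroup W} {l : List B} (hl : ∀ i ∈ l, s i ∈ H) (x : W) :
    x⁻¹ * demWord cs x l ∈ H := by
  induction l generalizing x with
  | nil => simp [demWord]
  | cons j l ih =>
    have hstep : x⁻¹ * demStep cs x j ∈ H := by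
      rcases demStep_cases cs x j with ⟨h, -⟩ | ⟨h, -⟩ <;> rw [h]
      · simpa using hl j List.mem_cons_self
      · simp
    have := mul_mem hstep (ih (fun i hi => hl i (List.mem_cons_of_mem j hi)) (demStep cs x j))
    rwa [mul_assoc, mul_inv_cancel_left] at this

theorem demWord_eq_self {x : W} {l : List B} (h : ∀ i ∈ l, cs.IsRightDescent x i) :
    demWord cs x l = x := by
  induction l with
  | nil => rfl
  | cons j l ih =>
    have hstep : demStep cs x j = x := if_neg (h j List.mem_cons_self).not_gt
    exact (congrArg (demWord cs · l) hstep).trans (ih fun i hi => h i (List.mem_cons_of_mem j hi))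

variable {cs} in
theorem isLeftInversion_demWord {x t : W} (ht : cs.IsLeftInversion x t) (l : List B) :
    cs.IsLeftInversion (demWord cs x l) t := by
  induction l generalizing x with
  | nil => exact ht
  | cons j l ih =>
    refine ih ?_
    rcases demStep_cases cs x j with ⟨h, hlen⟩ | ⟨h, -⟩ <;> rw [h]
    · exact ht.mul_right (by rw [hlen, length_simple])
    · exact ht

theorem exists_demWord_eq_mul_wordProd (x : W) {l : List B} (hl : cs.IsReduced l) :
    ∃ y, demWord cs x l = y * π l ∧ ℓ (demWord cs x l) = ℓ y + ℓ (π l) := by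
  induction l using List.reverseRecOn with
  | nil => exact ⟨x, by simp [demWord], by simp [demWord]⟩
  | append_singleton l j ih =>
    obtain ⟨y, hy, hylen⟩ := ih (by simpa using hl.take l.length)
    have hasc : ℓ (π l * s j) = ℓ (π l) + 1 := by
      have := hl.eq
      have := (hl.take l.length).eq
      simp_all [wordProd_append]
    have hfold : demWord cs x (l ++ [j]) = demStep cs (demWord cs x l) j := by
      simp [demWord, List.foldl_append]
    rw [hfold, wordProd_append, wordProd_singleton]
    rcases demStep_cases cs (demWord cs x l) j with ⟨h, hlen⟩ | ⟨h, hlen⟩ <;> rw [h]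
    · exact ⟨y, by rw [hy, mul_assoc], by omega⟩
    -- `s j` descends `y * π l` but not `π l`, so the exchange happens inside `y`.
    have hexch : cs.IsRightInversion y (π l * s j * (π l)⁻¹) := by
      refine cs.isRightInversion_conj_of_mul ?_ fun h => ?_
      · rw [← hy]
        exact ⟨cs.isReflection_simple j, by omega⟩
      · exact absurd h.2 (by omega)
    set y' := y * (π l * s j * (π l)⁻¹)
    have hprod : y' * (π l * s j) = demWord cs x l := by
      rw [hy]
      simp [y', mul_assoc]
    refine ⟨y', hprod.symm, ?_⟩
    have hshorter : ℓ y' < ℓ y := hexch.2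
    have hsub := cs.length_mul_le y' (π l * s j)
    rw [hprod] at hsub
    omega

theorem exists_dem_eq_demWord (x y : W) :
    ∃ l, cs.IsReduced l ∧ π l = y ∧ dem cs x y = demWord cs x l := by
  obtain ⟨hl, hy⟩ := Classical.choose_spec (cs.exists_isReduced y)
  exact ⟨_, hl, hy.symm, rfl⟩

theorem dem_eq_self {J : Set B} {x y : W} (hy : y ∈ parabolic cs J)
    (hx : ∀ i, s i ∈ parabolic cs J → cs.IsRightDescent x i) :
    dem cs x y = x := by
  obtain ⟨l, hl, rfl, hdem⟩ := exists_dem_eq_demWord cs x y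
  rw [hdem]
  exact demWord_eq_self cs fun i hi => hx i (simple_mem_parabolic_of_isReduced cs hl hy i hi)

theorem eq_dem_of_isMaxOf {I J : Set B} {q : Set W} {m wJ mq : W} (hq : IsDCoset cs I J q)
    (hmq : m ∈ q) (hm : ∀ t, cs.IsReflection t → t ∈ parabolic cs I → cs.IsLeftInversion m t)
    (hwJ : IsMaxOf cs (parabolic cs J) wJ) (hmax : IsMaxOf cs q mq) : mq = dem cs m wJ := by
  obtain ⟨l, hl, rfl, hdem⟩ := exists_dem_eq_demWord cs m wJ
  rw [hdem]
  have huq : demWord cs m l ∈ q := by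
    simpa using hq.mul_mem hmq (one_mem _)
      (inv_mul_demWord_mem cs (simple_mem_parabolic_of_isReduced cs hl hwJ.1) m)
  have hleft (t) (ht : cs.IsReflection t) (htI : t ∈ parabolic cs I) :
      cs.IsLeftInversion (demWord cs m l) t :=
    isLeftInversion_demWord (hm t ht htI) l
  have hright (t) (ht : cs.IsReflection t) (htJ : t ∈ parabolic cs J) :
      cs.IsRightInversion (demWord cs m l) t := by
    obtain ⟨y, hy, hylen⟩ := exists_demWord_eq_mul_wordProd cs m hl
    rw [hy] at hylen ⊢
    exact (hwJ.isRightInversion ht (mul_mem hwJ.1 htJ)).mul_left hylen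
  obtain ⟨a, ha, b, hb, hab⟩ := (hq.eq_doset huq).subst (motive := (mq ∈ ·)) hmax.1
  refine (eq_of_bruhatLE_of_length_le cs (hmax.2 _ huq) ?_).symm
  rw [hab]
  exact length_mul_mul_le cs hleft hright ha hb

end

theorem exprMax_succ (cs : CoxeterSystem M W) (wI : ℕ → W) (k : ℕ) :
    exprMax cs wI (k + 1) = dem cs (exprMax cs wI k) (wI (k + 1)) := by
  simp [exprMax, List.range_succ]

theorem forward_path_terminus_general (cs : CoxeterSystem M W) (I : ℕ → Set B) (d : ℕ)
    (hss : IsSinglestep I d)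
    (wI : ℕ → W) (hwI : ∀ i ≤ d, IsMaxOf cs (parabolic cs (I i) : Set W) (wI i))
    (p : ℕ → Set W) (hp : IsSubPath cs I d p)
    (Mp : ℕ → W) (hMp : ∀ i ≤ d, IsMaxOf cs (p i) (Mp i))
    (hfwd : ∀ k < d, I (k + 1) ⊆ I k → Mp (k + 1) = Mp k) :
    Mp d = exprMax cs wI d := by
  obtain ⟨hp₀, hcoset, hnest⟩ := hp
  have hstep (k : ℕ) (hk : k < d) : Mp (k + 1) = dem cs (Mp k) (wI (k + 1)) := by
    have hmax := hMp k hk.le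
    rcases hss k hk with ⟨i, -, hup⟩ | ⟨i, -, hdown⟩
    · exact eq_dem_of_isMaxOf cs (hcoset (k + 1) hk)
        ((hnest k hk).1 (hup ▸ Set.subset_insert i _) hmax.1)
        (fun _ => (hcoset k hk.le).isLeftInversion_of_isMaxOf hmax) (hwI (k + 1) hk)
        (hMp (k + 1) hk)
    · have hsub : I (k + 1) ⊆ I k := hdown ▸ Set.sdiff_subset
      rw [hfwd k hk hsub, dem_eq_self cs (hwI (k + 1) hk).1 fun _ hj =>
        (hcoset k hk.le).isRightDescent_of_isMaxOf hmax (parabolic_mono cs hsub hj)]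
  have hbase : IsMaxOf cs (parabolic cs (I 0)) (Mp 0) := by
    rw [← doset_one_self, ← hp₀]
    exact hMp 0 d.zero_le
  suffices ∀ k ≤ d, Mp k = exprMax cs wI k from this d le_rfl
  intro k hk
  induction k with
  | zero => simpa [exprMax] using hbase.eq (hwI 0 d.zero_le)
  | succ k ih => rw [hstep k hk, ih (by omega), exprMax_succ]

/-- The forward path subordinate to a singlestep expression terminates at the
coset expressed by it: its final maximal element is `w_{I_0} * ⋯ * w_{I_d}`. -/
theorem forward_path_terminus (cs : CoxeterSystem M W) (I : ℕ → Set B) (d : ℕ)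
    (hss : IsSinglestep I d) (hfin : ∀ i ≤ d, Finitary cs (I i))
    (wI : ℕ → W) (hwI : ∀ i ≤ d, IsMaxOf cs (parabolic cs (I i) : Set W) (wI i))
    (p : ℕ → Set W) (hp : IsSubPath cs I d p)
    (Mp : ℕ → W) (hMp : ∀ i ≤ d, IsMaxOf cs (p i) (Mp i))
    (hfwd : ∀ k < d, I (k + 1) ⊆ I k → Mp (k + 1) = Mp k) :
    Mp d = exprMax cs wI d :=
  forward_path_terminus_general cs I d hss wI hwI p hp Mp hMp hfwd

end CoxeterPaper
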